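/- Let t ∈ (0,1) and define β : ℤ → ℝ by β(n) = sgn(n)·|n|^{1/t} (so β(0) = 0). Then Λ_β = {(n, β(n)) : n ∈ ℤ} is a spectrum of the self-affine measure μ = μ_{R,B} for R = [[2,1],[0,2]] and B = {(0,0),(1,0)}, and dim_Be(Λ_β) = t. -/

import Mathlib

open MeasureTheory Filter Set Metric
open scoped ENNReal

noncomputable section

/-- The plane with the Euclidean metric. -/
abbrev Plane : Type := EuclideanSpace ℝ (Fin 2)

/-- The point `(a, b)` of the Euclidean plane. -/
def pt (a b : ℝ) : Plane := WithLp.toLp 2 ![a, b]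

/-- The self-affine measure `μ_{R,B}` for `R = [[2,1],[0,2]]`, `B = {(0,0),(1,0)}`:
the pushforward of Lebesgue measure on `[0,1]` under `x ↦ (x, 0)`. -/
def muRB : Measure Plane :=
  Measure.map (fun x : ℝ => pt x 0) (volume.restrict (Set.Icc (0:ℝ) 1))

instance : IsProbabilityMeasure (volume.restrict (Set.Icc (0:ℝ) 1)) :=
  ⟨by simp [Real.volume_Icc]⟩

lemma measurable_pt0 : Measurable (fun x : ℝ => pt x 0) := by
  unfold pt
  refine (WithLp.measurable_toLp (p := 2) (X := Fin 2 → ℝ)).comp ?_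
  refine measurable_pi_lambda _ (fun i => ?_)
  fin_cases i
  · simp only [Matrix.cons_val_zero]
    exact measurable_id
  · simp only [Matrix.cons_val_one, Matrix.head_cons]
    exact measurable_const

instance : IsProbabilityMeasure muRB :=
  Measure.isProbabilityMeasure_map measurable_pt0.aemeasurable

/-- The Fourier transform `μ̂(ξ) = ∫ e^{-2πi⟨ξ,x⟩} dμ(x)` of a measure on the plane. -/
def fourierTransform (μ : Measure Plane) (ξ : Plane) : ℂ :=
  ∫ x, Complex.exp ((-(2 * Real.pi * (inner ℝ ξ x : ℝ)) : ℝ) * Complex.I) ∂μ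

/-- The exponential function `e_λ(x) = e^{-2πi⟨λ,x⟩}`. -/
def expFn (lam : Plane) : Plane → ℂ :=
  fun x => Complex.exp ((-(2 * Real.pi * (inner ℝ lam x : ℝ)) : ℝ) * Complex.I)

lemma expFn_memLp (μ : Measure Plane) [IsFiniteMeasure μ] (lam : Plane) :
    MemLp (expFn lam) 2 μ := by
  refine MemLp.of_bound ?_ 1 ?_
  · apply Continuous.aestronglyMeasurable
    unfold expFn
    have h1 : Continuous fun x : Plane => (inner ℝ lam x : ℝ) :=
      continuous_const.inner continuous_id
    exact Complex.continuous_exp.comp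
      ((Complex.continuous_ofReal.comp ((continuous_const.mul h1).neg)).mul continuous_const)
  · refine Eventually.of_forall fun x => ?_
    unfold expFn
    rw [Complex.norm_exp_ofReal_mul_I]

/-- The exponential `e_λ` as an element of `L²(μ)`. -/
def expLp (μ : Measure Plane) [IsFiniteMeasure μ] (lam : Plane) : Lp ℂ 2 μ :=
  (expFn_memLp μ lam).toLp _

/-- `Λ` is an orthogonal set of `μ`: the exponentials `{e_λ : λ ∈ Λ}` form an
orthonormal family in `L²(μ)`. -/
def IsOrthogonalSet (μ : Measure Plane) [IsFiniteMeasure μ] (Λ : Set Plane) : Prop :=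
  Orthonormal ℂ (fun lam : Λ => expLp μ lam)

/-- `Λ` is a spectrum of `μ`: the exponentials `{e_λ : λ ∈ Λ}` form an
orthonormal basis of `L²(μ)`. -/
def IsSpectrum (μ : Measure Plane) [IsFiniteMeasure μ] (Λ : Set Plane) : Prop :=
  Orthonormal ℂ (fun lam : Λ => expLp μ lam) ∧
    (Submodule.span ℂ (Set.range (fun lam : Λ => expLp μ lam))).topologicalClosure = ⊤

/-- The upper `r`-Beurling density
`D_r^+(Λ) = limsup_{h→∞} sup_{x} #(Λ ∩ B(x,h)) / h^r`. -/
def beurlingDensity (r : ℝ) (Λ : Set Plane) : ℝ≥0∞ :=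
  limsup (fun h : ℝ =>
    ⨆ x : Plane, ((Λ ∩ Metric.ball x h).encard : ℝ≥0∞) / ENNReal.ofReal (h ^ r)) atTop

/-- The upper `r`-density (centered at the origin)
`B_r^+(Λ) = limsup_{h→∞} #(Λ ∩ B(0,h)) / h^r`. -/
def upperDensity (r : ℝ) (Λ : Set Plane) : ℝ≥0∞ :=
  limsup (fun h : ℝ =>
    ((Λ ∩ Metric.ball (0 : Plane) h).encard : ℝ≥0∞) / ENNReal.ofReal (h ^ r)) atTop

/-- The Beurling dimension `dim_Be(Λ) = sup {r > 0 : D_r^+(Λ) = ∞}`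
(equal to `0` when the set is empty, by the convention `sSup ∅ = 0` in `ℝ`). -/
def beurlingDim (Λ : Set Plane) : ℝ :=
  sSup {r : ℝ | 0 < r ∧ beurlingDensity r Λ = ⊤}

/-- The Banach dimension `dim_Ba(Λ) = sup {r > 0 : B_r^+(Λ) = ∞}`. -/
def banachDim (Λ : Set Plane) : ℝ :=
  sSup {r : ℝ | 0 < r ∧ upperDensity r Λ = ⊤}

/-- The sign of an integer, as a real number. -/
def isgn (n : ℤ) : ℝ := (Int.sign n : ℝ)

end


/-! `μ_{R,B}` is Lebesgue measure on the unit segment of the first axis, so `e_λ` only sees the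
first coordinate of `λ`, and the first coordinates of `Λ_β` run through `ℤ` exactly once. Unrolling
the circle `ℝ/ℤ` onto that segment is measure preserving and carries the exponentials of `Λ_β`
onto the Fourier basis of `L²(ℝ/ℤ)`; pulling back along it is an isometry, so `Λ_β` is a spectrum.

For the dimension, `β` has the monotone inverse `y ↦ sgn(y)|y|^t`, which is `t`-Hölder, so every
ball of radius `h ≥ 1` meets `Λ_β` in at most `5 h^t` points, while the ball of radius `h` about
the origin contains the points with `0 ≤ n ≤ (h/4)^t`. Hence `D_r^+(Λ_β)` is finite for `r ≥ t`
and infinite for `r < t`. -/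

open AddCircle Topology

noncomputable section

@[simp]
theorem pt_apply_zero (a b : ℝ) : pt a b 0 = a := rfl

@[simp]
theorem pt_apply_one (a b : ℝ) : pt a b 1 = b := rfl

theorem norm_pt_le (a b : ℝ) : ‖pt a b‖ ≤ |a| + |b| := by
  rw [EuclideanSpace.norm_eq, Real.sqrt_le_left (by positivity)]
  simp only [Fin.sum_univ_two, pt_apply_zero, pt_apply_one, Real.norm_eq_abs, sq_abs]
  nlinarith [abs_mul_abs_self a, abs_mul_abs_self b, abs_nonneg a, abs_nonneg b]

theorem inner_pt (a : Plane) (x y : ℝ) : inner ℝ a (pt x y) = a 0 * x + a 1 * y := by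
  simp [pt, PiLp.inner_apply, Fin.sum_univ_two, mul_comm]

theorem LinearIsometry.topologicalClosure_span_eq_top_of_comp {𝕜 E E' ι : Type*} [RCLike 𝕜]
    [NormedAddCommGroup E] [InnerProductSpace 𝕜 E] [CompleteSpace E]
    [NormedAddCommGroup E'] [InnerProductSpace 𝕜 E'] [CompleteSpace E']
    (V : E →ₗᵢ[𝕜] E') {v : ι → E}
    (h : (Submodule.span 𝕜 (range (V ∘ v))).topologicalClosure = ⊤) :
    (Submodule.span 𝕜 (range v)).topologicalClosure = ⊤ := by
  rw [Submodule.topologicalClosure_eq_top_iff, Submodule.eq_bot_iff] at h ⊢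
  intro x hx
  have hVx : V x ∈ (Submodule.span 𝕜 (range (V ∘ v)))ᗮ := by
    rw [range_comp, ← V.coe_toLinearMap, ← Submodule.map_span]
    rintro _ ⟨w, hw, rfl⟩
    exact (V.inner_map_map w x).trans (hx w hw)
  exact V.injective ((h _ hVx).trans V.map_zero.symm)

theorem isSpectrum_range {μ : Measure Plane} [IsFiniteMeasure μ] {ι : Type*} {f : ι → Plane}
    (hf : Function.Injective f) (hon : Orthonormal ℂ fun i => expLp μ (f i))
    (hspan : (Submodule.span ℂ (range fun i => expLp μ (f i))).topologicalClosure = ⊤) :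
    IsSpectrum μ (range f) := by
  have hreindex : (fun lam : range f => expLp μ lam)
      = (fun i => expLp μ (f i)) ∘ (Equiv.ofInjective f hf).symm := by
    ext1 lam
    simp only [Function.comp_apply, Equiv.apply_ofInjective_symm]
  rw [IsSpectrum, hreindex, EquivLike.range_comp]
  exact ⟨hon.comp _ (Equiv.injective _), hspan⟩

instance : Fact ((0 : ℝ) < 1) := ⟨one_pos⟩

def circleToAxis (x : AddCircle (1 : ℝ)) : Plane := pt (AddCircle.equivIoc 1 0 x) 0

theorem measurePreserving_circleToAxis :
    MeasurePreserving circleToAxis haarAddCircle muRB := by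
  have hhaar : (haarAddCircle : Measure (AddCircle (1 : ℝ))) = volume := by
    simp [AddCircle.volume_eq_smul_haarAddCircle]
  have hIcc : volume.restrict (Icc (0 : ℝ) 1) = volume.restrict (Ioc 0 (0 + 1)) := by
    rw [zero_add]; exact Measure.restrict_congr_set Ioc_ae_eq_Icc.symm
  have hpt : MeasurePreserving (fun x : ℝ => pt x 0) (volume.restrict (Ioc 0 (0 + 1))) muRB :=
    hIcc ▸ ⟨measurable_pt0, rfl⟩
  rw [hhaar]
  exact hpt.comp ((measurePreserving_subtype_coe measurableSet_Ioc).comp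
    (AddCircle.measurePreserving_equivIoc 1))

theorem expFn_circleToAxis {a : Plane} {n : ℤ} (ha : a 0 = n) (x : AddCircle (1 : ℝ)) :
    expFn a (circleToAxis x) = fourier (-n) x := by
  conv_rhs => rw [← AddCircle.coe_equivIoc (a := 0) (y := x)]
  rw [fourier_coe_apply, expFn, circleToAxis, inner_pt, ha]
  push_cast
  ring_nf

def toCircleLp : Lp ℂ 2 muRB →ₗᵢ[ℂ] Lp ℂ 2 (haarAddCircle (T := 1)) :=
  Lp.compMeasurePreservingₗᵢ ℂ circleToAxis measurePreserving_circleToAxis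

theorem toCircleLp_expLp {a : Plane} {n : ℤ} (ha : a 0 = n) :
    toCircleLp (expLp muRB a) = fourierLp 2 (-n) := by
  have hcomp : toCircleLp (expLp muRB a) =ᵐ[haarAddCircle] expLp muRB a ∘ circleToAxis :=
    Lp.coeFn_compMeasurePreserving _ _
  have hexp : expLp muRB a ∘ circleToAxis =ᵐ[haarAddCircle] expFn a ∘ circleToAxis :=
    measurePreserving_circleToAxis.quasiMeasurePreserving.ae_eq_comp (MemLp.coeFn_toLp _)
  refine Lp.ext (hcomp.trans (hexp.trans (.trans ?_ (coeFn_fourierLp 2 (-n)).symm)))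
  exact .of_forall (expFn_circleToAxis ha)

theorem isSpectrum_muRB_range {f : ℤ → Plane} (hf : ∀ n, f n 0 = n) :
    IsSpectrum muRB (range f) := by
  have himage : toCircleLp ∘ (fun n => expLp muRB (f n)) = fourierLp 2 ∘ Neg.neg :=
    funext fun n => toCircleLp_expLp (hf n)
  refine isSpectrum_range (fun n m h => by simpa [hf] using congr_arg (· 0) h) ?_ ?_
  · rw [← toCircleLp.orthonormal_comp_iff, himage]
    exact orthonormal_fourier.comp _ neg_injective
  · refine toCircleLp.topologicalClosure_span_eq_top_of_comp ?_
    rw [himage, range_comp, neg_surjective.range_eq, image_univ]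
    exact span_fourierLp_closure_eq_top (by simp)

section BeurlingDimension

variable {Λ : Set Plane} {t r : ℝ}

theorem beurlingDensity_le_of_encard_le {C : ℝ≥0∞} (htr : t ≤ r)
    (hupper : ∀ᶠ h in atTop, ∀ x, ((Λ ∩ ball x h).encard : ℝ≥0∞) ≤ C * ENNReal.ofReal (h ^ t)) :
    beurlingDensity r Λ ≤ C := by
  refine limsup_le_of_le (by isBoundedDefault) ?_
  filter_upwards [hupper, eventually_ge_atTop 1] with h hupper hh
  refine iSup_le fun x => ENNReal.div_le_of_le_mul ((hupper x).trans ?_)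
  gcongr

theorem beurlingDensity_eq_top_of_le_encard {c : ℝ≥0∞} (hc : c ≠ 0) (hrt : r < t) (x₀ : Plane)
    (hlower : ∀ᶠ h in atTop, c * ENNReal.ofReal (h ^ t) ≤ (Λ ∩ ball x₀ h).encard) :
    beurlingDensity r Λ = ⊤ := by
  have hlim : Tendsto (fun h : ℝ => c * ENNReal.ofReal (h ^ (t - r))) atTop (𝓝 ⊤) := by
    have := ENNReal.tendsto_ofReal_atTop.comp (tendsto_rpow_atTop (sub_pos.2 hrt))
    simpa [ENNReal.mul_top hc] using
      ENNReal.Tendsto.const_mul (a := c) this (.inl ENNReal.top_ne_zero)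
  refine (tendsto_nhds_top_mono hlim ?_).limsup_eq
  filter_upwards [hlower, eventually_gt_atTop 0] with h hlower hh
  calc c * ENNReal.ofReal (h ^ (t - r))
      = c * ENNReal.ofReal (h ^ t) / ENNReal.ofReal (h ^ r) := by
        rw [Real.rpow_sub hh, ENNReal.ofReal_div_of_pos (by positivity), mul_div_assoc]
    _ ≤ (Λ ∩ ball x₀ h).encard / ENNReal.ofReal (h ^ r) := by gcongr
    _ ≤ ⨆ x, (Λ ∩ ball x h).encard / ENNReal.ofReal (h ^ r) :=
        le_iSup (fun x => ((Λ ∩ ball x h).encard : ℝ≥0∞) / ENNReal.ofReal (h ^ r)) x₀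

theorem beurlingDim_eq_of_encard_bounds {C c : ℝ≥0∞} (ht : 0 < t) (hC : C ≠ ⊤) (hc : c ≠ 0)
    (x₀ : Plane)
    (hupper : ∀ᶠ h in atTop, ∀ x, ((Λ ∩ ball x h).encard : ℝ≥0∞) ≤ C * ENNReal.ofReal (h ^ t))
    (hlower : ∀ᶠ h in atTop, c * ENNReal.ofReal (h ^ t) ≤ (Λ ∩ ball x₀ h).encard) :
    beurlingDim Λ = t := by
  have hdim : {r : ℝ | 0 < r ∧ beurlingDensity r Λ = ⊤} = Ioo 0 t := by
    ext r
    refine and_congr_right fun _ => ⟨fun htop => lt_of_not_ge fun htr => hC ?_,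
      fun hrt => beurlingDensity_eq_top_of_le_encard hc hrt x₀ hlower⟩
    exact top_unique (htop ▸ beurlingDensity_le_of_encard_le htr hupper)
  rw [beurlingDim, hdim, csSup_Ioo ht]

end BeurlingDimension

theorem encard_Icc_ceil_floor_le (a b : ℝ) :
    ((Icc ⌈a⌉ ⌊b⌋ : Set ℤ).encard : ℝ≥0∞) ≤ ENNReal.ofReal (b - a + 1) := by
  rw [← Finset.coe_Icc, Set.encard_coe_eq_coe_finsetCard, Int.card_Icc]
  have hlen : ((⌊b⌋ + 1 - ⌈a⌉ : ℤ) : ℝ) ≤ b - a + 1 := by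
    push_cast; linarith [Int.floor_le b, Int.le_ceil a]
  rw [ENat.toENNReal_coe, ← ENNReal.ofReal_natCast, ENNReal.ofReal_le_ofReal_iff']
  rcases le_or_gt 0 (⌊b⌋ + 1 - ⌈a⌉) with hk | hk
  · left; rwa [← Int.cast_natCast, Int.toNat_of_nonneg hk]
  · right; simp [Int.toNat_eq_zero.2 hk.le]

theorem encard_setOf_mem_Icc_le {β g : ℝ → ℝ} (hg : Monotone g) (hgβ : ∀ n : ℤ, g (β n) = n)
    (a b : ℝ) :
    (({n : ℤ | β n ∈ Icc a b}).encard : ℝ≥0∞) ≤ ENNReal.ofReal (g b - g a + 1) := by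
  refine le_trans ?_ (encard_Icc_ceil_floor_le _ _)
  gcongr
  rintro n ⟨hna, hnb⟩
  exact ⟨Int.ceil_le.2 (hgβ n ▸ hg hna), Int.le_floor.2 (hgβ n ▸ hg hnb)⟩

def signedRpow (p y : ℝ) : ℝ := Real.sign y * |y| ^ p

section SignedRpow

variable {p q : ℝ}

theorem signedRpow_of_pos {y : ℝ} (hy : 0 < y) : signedRpow p y = y ^ p := by
  simp [signedRpow, Real.sign_of_pos hy, abs_of_pos hy]

theorem signedRpow_neg (y : ℝ) : signedRpow p (-y) = -signedRpow p y := by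
  simp [signedRpow, Real.sign_neg]

theorem signedRpow_of_nonneg (hp : p ≠ 0) {y : ℝ} (hy : 0 ≤ y) : signedRpow p y = y ^ p := by
  rcases hy.lt_or_eq with hy | rfl
  · exact signedRpow_of_pos hy
  · simp [signedRpow, Real.sign_zero, Real.zero_rpow hp]

theorem signedRpow_of_nonpos (hp : p ≠ 0) {y : ℝ} (hy : y ≤ 0) :
    signedRpow p y = -(-y) ^ p := by
  rw [← neg_neg y, signedRpow_neg, signedRpow_of_nonneg hp (neg_nonneg.2 hy), neg_neg]

theorem abs_signedRpow_le (y : ℝ) : |signedRpow p y| ≤ |y| ^ p := by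
  rcases lt_trichotomy y 0 with hy | rfl | hy
  · simp [signedRpow, Real.sign_of_neg hy, abs_of_nonneg (Real.rpow_nonneg (abs_nonneg y) p)]
  · simp [signedRpow, Real.sign_zero, Real.rpow_nonneg]
  · simp [signedRpow, Real.sign_of_pos hy, abs_of_nonneg (Real.rpow_nonneg (abs_nonneg y) p)]

theorem signedRpow_signedRpow (y : ℝ) : signedRpow p (signedRpow q y) = signedRpow (q * p) y := by
  rcases lt_trichotomy y 0 with hy | rfl | hy
  · obtain ⟨z, hz, rfl⟩ : ∃ z, 0 < z ∧ y = -z := ⟨-y, neg_pos.2 hy, (neg_neg y).symm⟩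
    simp only [signedRpow_neg]
    rw [signedRpow_of_pos hz, signedRpow_of_pos (Real.rpow_pos_of_pos hz q),
      signedRpow_of_pos hz, Real.rpow_mul hz.le]
  · simp [signedRpow, Real.sign_zero]
  · rw [signedRpow_of_pos hy, signedRpow_of_pos (Real.rpow_pos_of_pos hy q),
      signedRpow_of_pos hy, Real.rpow_mul hy.le]

theorem signedRpow_one (y : ℝ) : signedRpow 1 y = y := by
  rcases le_total 0 y with hy | hy
  · rw [signedRpow_of_nonneg one_ne_zero hy, Real.rpow_one]
  · rw [signedRpow_of_nonpos one_ne_zero hy, Real.rpow_one, neg_neg]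

theorem monotone_signedRpow (hp : 0 < p) : Monotone (signedRpow p) := by
  intro u v huv
  rcases le_total 0 u with hu | hu
  · rw [signedRpow_of_nonneg hp.ne' hu, signedRpow_of_nonneg hp.ne' (hu.trans huv)]
    exact Real.rpow_le_rpow hu huv hp.le
  rcases le_total 0 v with hv | hv
  · rw [signedRpow_of_nonpos hp.ne' hu, signedRpow_of_nonneg hp.ne' hv]
    linarith [Real.rpow_nonneg (neg_nonneg.2 hu) p, Real.rpow_nonneg hv p]
  · rw [signedRpow_of_nonpos hp.ne' hu, signedRpow_of_nonpos hp.ne' hv, neg_le_neg_iff]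
    exact Real.rpow_le_rpow (neg_nonneg.2 hv) (neg_le_neg huv) hp.le

theorem signedRpow_sub_le (hp : 0 < p) (hp1 : p ≤ 1) {u v : ℝ} (hvu : v ≤ u) :
    signedRpow p u - signedRpow p v ≤ 2 * (u - v) ^ p := by
  have hsub : ∀ {a b : ℝ}, 0 ≤ a → 0 ≤ b → (a + b) ^ p ≤ a ^ p + b ^ p :=
    fun ha hb => Real.rpow_add_le_add_rpow ha hb hp.le hp1
  have hd := Real.rpow_nonneg (sub_nonneg.2 hvu) p
  rcases le_total 0 v with hv | hv
  · rw [signedRpow_of_nonneg hp.ne' hv, signedRpow_of_nonneg hp.ne' (hv.trans hvu)]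
    have := hsub (sub_nonneg.2 hvu) hv
    rw [sub_add_cancel] at this
    linarith
  rcases le_total 0 u with hu | hu
  · rw [signedRpow_of_nonpos hp.ne' hv, signedRpow_of_nonneg hp.ne' hu]
    have h1 : u ^ p ≤ (u - v) ^ p := Real.rpow_le_rpow hu (by linarith) hp.le
    have h2 : (-v) ^ p ≤ (u - v) ^ p := Real.rpow_le_rpow (by linarith) (by linarith) hp.le
    linarith
  · rw [signedRpow_of_nonpos hp.ne' hv, signedRpow_of_nonpos hp.ne' hu]
    have := hsub (sub_nonneg.2 hvu) (neg_nonneg.2 hu)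
    rw [show u - v + -u = -v by ring] at this
    linarith

end SignedRpow

def powerSpectrum (t : ℝ) : Set Plane := range fun n : ℤ => pt n (signedRpow (1 / t) n)

section PowerSpectrum

variable {t : ℝ}

theorem encard_powerSpectrum_inter_ball_le (ht : 0 < t) (ht1 : t ≤ 1) (x : Plane) {h : ℝ}
    (hh : 1 ≤ h) : ((powerSpectrum t ∩ ball x h).encard : ℝ≥0∞) ≤ 5 * ENNReal.ofReal (h ^ t) := by
  set F := fun n : ℤ => pt n (signedRpow (1 / t) n)
  have hsub : powerSpectrum t ∩ ball x h
      ⊆ F '' {n | signedRpow (1 / t) n ∈ Icc (x 1 - h) (x 1 + h)} := by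
    rintro _ ⟨⟨n, rfl⟩, hn⟩
    refine ⟨n, ?_, rfl⟩
    have hdist := (PiLp.dist_apply_le (F n) x 1).trans (mem_ball.1 hn).le
    rw [Real.dist_eq, abs_le, pt_apply_one] at hdist
    exact ⟨by linarith [hdist.1], by linarith [hdist.2]⟩
  have hinv : ∀ n : ℤ, signedRpow t (signedRpow (1 / t) n) = n := fun n => by
    rw [signedRpow_signedRpow, one_div_mul_cancel ht.ne', signedRpow_one]
  have hspread : signedRpow t (x 1 + h) - signedRpow t (x 1 - h) + 1 ≤ 5 * h ^ t := by
    have hholder := signedRpow_sub_le ht ht1 (by linarith : x 1 - h ≤ x 1 + h)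
    have h2 : (2 : ℝ) ^ t ≤ 2 := by
      simpa using Real.rpow_le_rpow_of_exponent_le one_le_two ht1
    have h1 : 1 ≤ h ^ t := Real.one_le_rpow hh ht.le
    rw [show x 1 + h - (x 1 - h) = 2 * h by ring,
      Real.mul_rpow zero_le_two (by linarith)] at hholder
    nlinarith [Real.rpow_nonneg (zero_le_one.trans hh) t]
  calc ((powerSpectrum t ∩ ball x h).encard : ℝ≥0∞)
      ≤ ({n : ℤ | signedRpow (1 / t) n ∈ Icc (x 1 - h) (x 1 + h)}.encard : ℝ≥0∞) := by
        exact_mod_cast (encard_le_encard hsub).trans (encard_image_le _ _)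
    _ ≤ ENNReal.ofReal (signedRpow t (x 1 + h) - signedRpow t (x 1 - h) + 1) :=
        encard_setOf_mem_Icc_le (monotone_signedRpow ht) hinv _ _
    _ ≤ ENNReal.ofReal (5 * h ^ t) := ENNReal.ofReal_le_ofReal hspread
    _ = 5 * ENNReal.ofReal (h ^ t) := by rw [ENNReal.ofReal_mul (by norm_num)]; norm_num

theorem ofReal_le_encard_powerSpectrum_inter_ball (ht : 0 < t) (ht1 : t ≤ 1) {h : ℝ}
    (hh : 4 ≤ h) : ENNReal.ofReal ((h / 4) ^ t) ≤ (powerSpectrum t ∩ ball 0 h).encard := by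
  set F := fun n : ℤ => pt n (signedRpow (1 / t) n)
  set N := ⌊(h / 4) ^ t⌋₊
  have hsub : (fun n : ℕ => F n) '' (Finset.range (N + 1)) ⊆ powerSpectrum t ∩ ball 0 h := by
    rintro _ ⟨n, hn, rfl⟩
    refine ⟨⟨n, rfl⟩, mem_ball_zero_iff.2 ?_⟩
    have hnN : (n : ℝ) ≤ (h / 4) ^ t :=
      (Nat.le_floor_iff (by positivity)).1 (Nat.lt_succ_iff.1 (Finset.mem_range.1 hn))
    have hn4 : (n : ℝ) ≤ h / 4 := hnN.trans <| by
      simpa using Real.rpow_le_rpow_of_exponent_le (by linarith : (1 : ℝ) ≤ h / 4) ht1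
    have hβ : |signedRpow (1 / t) n| ≤ h / 4 := by
      refine (abs_signedRpow_le _).trans ?_
      calc |((n : ℤ) : ℝ)| ^ (1 / t) ≤ ((h / 4) ^ t) ^ (1 / t) := by
            gcongr; simpa using hnN
        _ = h / 4 := by
            rw [← Real.rpow_mul (by positivity), mul_one_div_cancel ht.ne', Real.rpow_one]
    calc ‖F n‖ ≤ |((n : ℤ) : ℝ)| + |signedRpow (1 / t) n| := norm_pt_le _ _
      _ ≤ h / 4 + h / 4 := add_le_add (by simpa using hn4) hβ
      _ < h := by linarith
  have hF : Function.Injective fun n : ℕ => F n := fun n m hnm => by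
    simpa [F] using congr_arg (· 0) hnm
  calc ENNReal.ofReal ((h / 4) ^ t) ≤ ((N + 1 : ℕ) : ℝ≥0∞) := by
        rw [← ENNReal.ofReal_natCast]
        exact ENNReal.ofReal_le_ofReal (by exact_mod_cast (Nat.lt_floor_add_one _).le)
    _ = ((fun n : ℕ => F n) '' (Finset.range (N + 1))).encard := by
        rw [hF.encard_image, Set.encard_coe_eq_coe_finsetCard, Finset.card_range]; rfl
    _ ≤ (powerSpectrum t ∩ ball 0 h).encard := by exact_mod_cast encard_le_encard hsub

end PowerSpectrum

end

/-- For `t ∈ (0,1)` and `β(n) = sgn(n)·|n|^{1/t}`, the set `Λ_β` is a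
spectrum of `μ_{R,B}` with `dim_Be(Λ_β) = t`. -/
theorem isSpectrum_muRB_power (t : ℝ) (ht : t ∈ Set.Ioo (0 : ℝ) 1) :
    IsSpectrum muRB
        (Set.range fun n : ℤ => pt (n : ℝ) (isgn n * |(n : ℝ)| ^ (1 / t))) ∧
      beurlingDim
        (Set.range fun n : ℤ => pt (n : ℝ) (isgn n * |(n : ℝ)| ^ (1 / t))) = t := by
  have hΛ : (Set.range fun n : ℤ => pt (n : ℝ) (isgn n * |(n : ℝ)| ^ (1 / t)))
      = powerSpectrum t := by
    simp only [powerSpectrum, signedRpow, isgn, Real.sign_intCast]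
  rw [hΛ]
  refine ⟨isSpectrum_muRB_range fun n => pt_apply_zero _ _, ?_⟩
  refine beurlingDim_eq_of_encard_bounds (C := 5) (c := ENNReal.ofReal (4 ^ t)⁻¹) ht.1
    ENNReal.ofNat_ne_top (ENNReal.ofReal_pos.2 (by positivity)).ne' 0 ?_ ?_
  · filter_upwards [eventually_ge_atTop 1] with h hh x
    exact encard_powerSpectrum_inter_ball_le ht.1 ht.2.le x hh
  · filter_upwards [eventually_ge_atTop 4] with h hh
    rw [← ENNReal.ofReal_mul (by positivity), inv_mul_eq_div,
      ← Real.div_rpow (by linarith) (by norm_num)]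
    exact ofReal_le_encard_powerSpectrum_inter_ball ht.1 ht.2.le hh
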